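/- With the hypotheses of the generalized power iteration, the error of the Rayleigh quotient satisfies |E^{(k)} - E_m| ≤ C·R^{2k} for some constant C, where R = max_{n≠m} |f(E_n)/f(E_m)| < 1. -/

import Mathlib

/-!
Expanding `ψ` in the eigenbasis, `F ^ k ψ = ∑ c n f(E n) ^ k φ n`, so the Rayleigh quotient is the
average of the `E n` with weights `(c n f(E n) ^ k) ^ 2`. Its distance to `E m` is at most
`∑_{n ≠ m} (c n f(E n) ^ k / (c m f(E m) ^ k)) ^ 2 |E n - E m|`, and each ratio
`(f(E n) / f(E m)) ^ 2k` is at most `R ^ 2k`.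
-/

open scoped RealInnerProductSpace

open Finset

lemma abs_weighted_mean_sub_le {ι : Type*} [Fintype ι] [DecidableEq ι] {w : ι → ℝ}
    (hw : ∀ n, 0 ≤ w n) {m : ι} (hm : 0 < w m) (x : ι → ℝ) :
    |(∑ n, w n * x n) / (∑ n, w n) - x m| ≤ ∑ n ∈ univ.erase m, w n / w m * |x n - x m| := by
  have hmS : w m ≤ ∑ n, w n := single_le_sum (fun n _ => hw n) (mem_univ m)
  have hS : 0 < ∑ n, w n := hm.trans_le hmS
  have hdev : (∑ n, w n * x n) / (∑ n, w n) - x m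
      = (∑ n ∈ univ.erase m, w n * (x n - x m)) / ∑ n, w n := by
    rw [div_sub' hS.ne', sum_erase _ (by simp), sum_mul, ← sum_sub_distrib]
    simp_rw [mul_sub]
  calc |(∑ n, w n * x n) / (∑ n, w n) - x m|
      ≤ (∑ n ∈ univ.erase m, w n * |x n - x m|) / ∑ n, w n := by
        rw [hdev, abs_div, abs_of_pos hS]
        gcongr
        refine (abs_sum_le_sum_abs _ _).trans_eq (sum_congr rfl fun n _ => ?_)
        rw [abs_mul, abs_of_nonneg (hw n)]
    _ ≤ (∑ n ∈ univ.erase m, w n * |x n - x m|) / w m := by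
        gcongr
        exact sum_nonneg fun n _ => mul_nonneg (hw n) (abs_nonneg _)
    _ = ∑ n ∈ univ.erase m, w n / w m * |x n - x m| := by
        rw [sum_div]
        exact sum_congr rfl fun n _ => by ring

section EigenExpansion

variable {V ι : Type*} [NormedAddCommGroup V] [InnerProductSpace ℝ V] [Fintype ι]
    {T : V →ₗ[ℝ] V} {φ : ι → V} {μ : ι → ℝ}

lemma LinearMap.apply_sum_smul_of_eigen (hT : ∀ n, T (φ n) = μ n • φ n) (a : ι → ℝ) :
    T (∑ n, a n • φ n) = ∑ n, (a n * μ n) • φ n := by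
  simp only [map_sum, map_smul, hT, smul_smul]

lemma LinearMap.pow_apply_sum_smul_of_eigen (hT : ∀ n, T (φ n) = μ n • φ n) (a : ι → ℝ)
    (k : ℕ) : (T ^ k) (∑ n, a n • φ n) = ∑ n, (a n * μ n ^ k) • φ n := by
  induction k with
  | zero => simp
  | succ k ih =>
    rw [pow_succ', Module.End.mul_apply, ih, T.apply_sum_smul_of_eigen hT]
    simp_rw [pow_succ, mul_assoc]

lemma Orthonormal.abs_rayleigh_sub_eigenvalue_le [DecidableEq ι] (hφ : Orthonormal ℝ φ)
    (hT : ∀ n, T (φ n) = μ n • φ n) {a : ι → ℝ} {m : ι} (ha : a m ≠ 0) :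
    |⟪∑ n, a n • φ n, T (∑ n, a n • φ n)⟫ / ⟪∑ n, a n • φ n, ∑ n, a n • φ n⟫ - μ m|
      ≤ ∑ n ∈ univ.erase m, (a n / a m) ^ 2 * |μ n - μ m| := by
  rw [T.apply_sum_smul_of_eigen hT, hφ.inner_sum, hφ.inner_sum]
  simp only [conj_trivial, ← mul_assoc, ← sq]
  simpa only [div_pow] using
    abs_weighted_mean_sub_le (fun n => sq_nonneg (a n)) (by positivity) μ

end EigenExpansion

theorem stmt_7_general {V : Type*} [NormedAddCommGroup V] [InnerProductSpace ℝ V]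
    {N : ℕ}
    (H : V →ₗ[ℝ] V)
    (φ : Fin (N + 1) → V) (hφ : Orthonormal ℝ φ)
    (E : Fin (N + 1) → ℝ)
    (heig : ∀ n, H (φ n) = E n • φ n)
    (f : ℝ → ℝ) (F : V →ₗ[ℝ] V) (hF : ∀ n, F (φ n) = f (E n) • φ n)
    (m : Fin (N + 1)) (hdom : ∀ n, n ≠ m → |f (E n)| < |f (E m)|)
    (c : Fin (N + 1) → ℝ) (hc : c m ≠ 0) (ψ : V) (hψ : ψ = ∑ n, c n • φ n)
    (hNe : (Finset.univ.erase m).Nonempty)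
    (R : ℝ)
    (hR : R = (Finset.univ.erase m).sup' hNe (fun n => |f (E n)| / |f (E m)|)) :
    R < 1 ∧ ∃ C : ℝ, ∀ k : ℕ,
      |⟪(F ^ k) ψ, H ((F ^ k) ψ)⟫ / ⟪(F ^ k) ψ, (F ^ k) ψ⟫ - E m| ≤
        C * R ^ (2 * k) := by
  have hfm : 0 < |f (E m)| := by
    obtain ⟨n, hn⟩ := hNe
    exact lt_of_le_of_lt (abs_nonneg _) (hdom n (mem_erase.1 hn).1)
  have hratio : ∀ n ∈ univ.erase m, (f (E n) / f (E m)) ^ 2 ≤ R ^ 2 := fun n hn => by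
    have h : |f (E n)| / |f (E m)| ≤ R := hR ▸ le_sup' (fun n => |f (E n)| / |f (E m)|) hn
    rw [← abs_div] at h
    simpa only [sq_abs] using pow_le_pow_left₀ (abs_nonneg _) h 2
  refine ⟨hR ▸ (sup'_lt_iff _).2 fun n hn => (div_lt_one hfm).2 (hdom n (mem_erase.1 hn).1),
    ∑ n ∈ univ.erase m, (c n / c m) ^ 2 * |E n - E m|, fun k => ?_⟩
  rw [hψ, F.pow_apply_sum_smul_of_eigen hF]
  refine (hφ.abs_rayleigh_sub_eigenvalue_le heig
    (mul_ne_zero hc (pow_ne_zero k (abs_pos.1 hfm)))).trans ?_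
  rw [sum_mul]
  refine sum_le_sum fun n hn => ?_
  calc (c n * f (E n) ^ k / (c m * f (E m) ^ k)) ^ 2 * |E n - E m|
      = (c n / c m) ^ 2 * |E n - E m| * ((f (E n) / f (E m)) ^ 2) ^ k := by ring
    _ ≤ (c n / c m) ^ 2 * |E n - E m| * (R ^ 2) ^ k :=
        mul_le_mul_of_nonneg_left (pow_le_pow_left₀ (sq_nonneg _) (hratio n hn) k) (by positivity)
    _ = (c n / c m) ^ 2 * |E n - E m| * R ^ (2 * k) := by rw [pow_mul]

theorem stmt_7 {V : Type*} [NormedAddCommGroup V] [InnerProductSpace ℝ V]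
    [FiniteDimensional ℝ V] {N : ℕ}
    (H : V →ₗ[ℝ] V) (hH : LinearMap.IsSymmetric H)
    (φ : Fin (N + 1) → V) (hφ : Orthonormal ℝ φ)
    (E : Fin (N + 1) → ℝ) (hmono : StrictMono E) (hpos : ∀ n, 0 < E n)
    (heig : ∀ n, H (φ n) = E n • φ n)
    (f : ℝ → ℝ) (F : V →ₗ[ℝ] V) (hF : ∀ n, F (φ n) = f (E n) • φ n)
    (m : Fin (N + 1)) (hdom : ∀ n, n ≠ m → |f (E n)| < |f (E m)|)
    (c : Fin (N + 1) → ℝ) (hc : c m ≠ 0) (ψ : V) (hψ : ψ = ∑ n, c n • φ n)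
    (hNe : (Finset.univ.erase m).Nonempty)
    (R : ℝ)
    (hR : R = (Finset.univ.erase m).sup' hNe (fun n => |f (E n)| / |f (E m)|)) :
    R < 1 ∧ ∃ C : ℝ, ∀ k : ℕ,
      |⟪(F ^ k) ψ, H ((F ^ k) ψ)⟫ / ⟪(F ^ k) ψ, (F ^ k) ψ⟫ - E m| ≤
        C * R ^ (2 * k) :=
  stmt_7_general H φ hφ E heig f F hF m hdom c hc ψ hψ hNe R hR
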